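/- Let μ, δ, S, κ, σ, β satisfy (1+√5)/2 ≤ κ < 2, (κ+1)μ < δ, κ²/(κ-1)·μ < κβ < σ < S, and β > μ + σ - δ. Then each of the exponents β - κ(β-μ), σ - δ - κ(β-μ), and κ(σ-δ)₊ - (δ-σ)₊ - κ(β-μ) is strictly negative. -/

import Mathlib

/-!
Since `κ > 1`, the hypothesis `κ²/(κ-1) μ < κβ` rearranges to `κμ < (κ-1)β`, which is exactly the
negativity of `β - κ(β-μ)`, and which forces `β > μ` because `μ > 0`. The remaining two exponents
are at most `max (σ-δ) (κ(σ-δ)) - κ(β-μ)`, which is negative because `σ - δ < β - μ`.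
-/

section

variable {κ μ β x y : ℝ}

theorem mul_lt_sub_one_mul_of_sq_div_sub_one_mul_lt (hκ : 1 < κ)
    (h : κ ^ 2 / (κ - 1) * μ < κ * β) : κ * μ < (κ - 1) * β := by
  have hκ1 : 0 < κ - 1 := sub_pos.2 hκ
  rw [div_mul_eq_mul_div, div_lt_iff₀ hκ1, pow_two, mul_assoc, mul_assoc] at h
  exact lt_of_mul_lt_mul_left (by linarith) (by linarith : (0 : ℝ) ≤ κ)

theorem lt_of_mul_lt_sub_one_mul (hκ : 1 < κ) (hμ : 0 < μ) (h : κ * μ < (κ - 1) * β) :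
    μ < β := by
  have : (κ - 1) * μ < (κ - 1) * β := by linarith
  exact lt_of_mul_lt_mul_left this (by linarith)

theorem sub_mul_neg_of_lt (hκ : 1 ≤ κ) (hy : 0 ≤ y) (hxy : x < y) : x - κ * y < 0 := by
  linarith [le_mul_of_one_le_left hy hκ]

theorem mul_max_sub_max_sub_mul_neg (a b : ℝ) (hκ : 0 < κ) (hy : 0 < y) (h : a - b < y) :
    κ * max (a - b) 0 - max (b - a) 0 - κ * y < 0 := by
  rcases le_total (a - b) 0 with hab | hab
  · rw [max_eq_right hab, max_eq_left (by linarith)]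
    linarith [mul_pos hκ hy]
  · rw [max_eq_left hab, max_eq_right (by linarith)]
    linarith [mul_lt_mul_of_pos_left h hκ]

end

theorem stmt_14_general (μ δ κ σ β : ℝ) (hμ : 0 < μ)
    (hκ1 : (1 + Real.sqrt 5) / 2 ≤ κ)
    (h1 : κ ^ 2 / (κ - 1) * μ < κ * β)
    (h4 : μ + σ - δ < β) :
    β - κ * (β - μ) < 0 ∧
    σ - δ - κ * (β - μ) < 0 ∧
    κ * max (σ - δ) 0 - max (δ - σ) 0 - κ * (β - μ) < 0 := by
  have hκ : 1 < κ := Real.one_lt_goldenRatio.trans_le hκ1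
  have hβ := mul_lt_sub_one_mul_of_sq_div_sub_one_mul_lt hκ h1
  have hμβ : 0 < β - μ := sub_pos.2 (lt_of_mul_lt_sub_one_mul hκ hμ hβ)
  have hσδ : σ - δ < β - μ := by linarith
  exact ⟨by linarith, sub_mul_neg_of_lt hκ.le hμβ.le hσδ,
    mul_max_sub_max_sub_mul_neg σ δ (by linarith) hμβ hσδ⟩

/-- Negativity of the three exponents of `φ₁` in the regime `(1+√5)/2 ≤ κ < 2`. -/
theorem stmt_14 (μ δ S κ σ β : ℝ) (hμ : 0 < μ)
    (hκ1 : (1 + Real.sqrt 5) / 2 ≤ κ) (hκ2 : κ < 2)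
    (hδ : (κ + 1) * μ < δ)
    (h1 : κ ^ 2 / (κ - 1) * μ < κ * β) (h2 : κ * β < σ) (h3 : σ < S)
    (h4 : μ + σ - δ < β) :
    β - κ * (β - μ) < 0 ∧
    σ - δ - κ * (β - μ) < 0 ∧
    κ * max (σ - δ) 0 - max (δ - σ) 0 - κ * (β - μ) < 0 :=
  stmt_14_general μ δ κ σ β hμ hκ1 h1 h4
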